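/- Let k, h, m, r be integers with m ≥ 1, k > m, h ≥ 0, r ≥ 1 and rk ≥ rm + m. Then the diagonal matrix in M_{rm+m}(ℂ) whose first rm diagonal entries are all equal to k/m and whose remaining m diagonal entries are all equal to h/m is a finite sum of projections in M_{rm+m}(ℂ). -/

import Mathlib

/-!
A diagonal matrix `diag(d)` of size `n` with `d ≥ 0` and trace an integer `T ≥ n` is a sum of `T`
rank-one projections: embed the indices into `ℤ/T` and take the Fourier vectors
`v_j(a) = √(d_a / T) · ψ(j a)`, `j ∈ ℤ/T`, with `ψ` the standard additive character. Each `v_j` is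
a unit vector because `∑ d_a / T = 1`, and `∑_j v_j v_jᴴ = diag(d)` by orthogonality of characters.
The matrix of the theorem has trace `r k + h ≥ r m + m`.
-/

open Matrix

def IsFiniteSumOfProjections {R : Type*} [AddCommMonoid R] [Mul R] [Star R] (a : R) : Prop :=
  ∃ (N : ℕ) (p : Fin N → R), (∀ i, IsStarProjection (p i)) ∧ a = ∑ i, p i

theorem IsFiniteSumOfProjections.sum {R ι : Type*} [AddCommMonoid R] [Mul R] [Star R] [Fintype ι]
    {p : ι → R} (hp : ∀ i, IsStarProjection (p i)) : IsFiniteSumOfProjections (∑ i, p i) :=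
  ⟨_, p ∘ (Fintype.equivFin ι).symm, fun _ => hp _, (Equiv.sum_comp _ p).symm⟩

theorem Matrix.isStarProjection_vecMulVec_star {n R : Type*} [Fintype n] [CommSemiring R]
    [StarRing R] {v : n → R} (hv : star v ⬝ᵥ v = 1) : IsStarProjection (vecMulVec v (star v)) where
  isIdempotentElem := by
    rw [IsIdempotentElem, vecMulVec_mul_vecMulVec, hv, one_smul]
  isSelfAdjoint := by
    rw [IsSelfAdjoint, star_eq_conjTranspose, conjTranspose_vecMulVec, star_star]

section Fourier

variable {ι R : Type*} [CommRing R] [Fintype R]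

def fourierVec (ψ : AddChar R ℂ) (e : ι → R) (c : ι → ℂ) (j : R) : ι → ℂ :=
  fun i => c i * ψ (j * e i)

theorem star_fourierVec_dotProduct_self [Fintype ι] (ψ : AddChar R ℂ) (e : ι → R) (c : ι → ℂ)
    (j : R) :
    star (fourierVec ψ e c j) ⬝ᵥ fourierVec ψ e c j = ∑ i, star (c i) * c i := by
  refine Finset.sum_congr rfl fun i _ => ?_
  have hψ : star (ψ (j * e i)) * ψ (j * e i) = 1 := by
    rw [Complex.star_def, ← AddChar.map_neg_eq_conj, ← AddChar.map_add_eq_mul, neg_add_cancel,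
      AddChar.map_zero_eq_one]
  simp only [fourierVec, Pi.star_apply, star_mul']
  linear_combination star (c i) * c i * hψ

theorem sum_vecMulVec_fourierVec [DecidableEq ι] [DecidableEq R] {ψ : AddChar R ℂ}
    (hψ : ψ.IsPrimitive) {e : ι → R} (he : Function.Injective e) (c : ι → ℂ) :
    ∑ j, vecMulVec (fourierVec ψ e c j) (star (fourierVec ψ e c j)) =
      diagonal fun i => Fintype.card R * (c i * star (c i)) := by
  ext a b
  have hchar : ∀ j, ψ (j * e a) * star (ψ (j * e b)) = ψ (j * (e a - e b)) := fun j => by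
    rw [Complex.star_def, ← AddChar.map_neg_eq_conj, ← AddChar.map_add_eq_mul]
    congr 1; ring
  simp only [Matrix.sum_apply, vecMulVec_apply, fourierVec, Pi.star_apply, star_mul']
  calc ∑ j, c a * ψ (j * e a) * (star (c b) * star (ψ (j * e b)))
      = c a * star (c b) * ∑ j, ψ (j * (e a - e b)) := by
        rw [Finset.mul_sum]
        exact Finset.sum_congr rfl fun j _ => by rw [← hchar]; ring
    _ = _ := by
        rw [AddChar.sum_mulShift _ hψ]
        by_cases hab : a = b
        · subst hab; simp only [sub_self, if_true, diagonal_apply_eq]; ring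
        · simp [hab, sub_eq_zero, he.eq_iff]

end Fourier

theorem isFiniteSumOfProjections_diagonal_of_sum_eq_natCast {ι : Type*} [Fintype ι]
    [DecidableEq ι] {T : ℕ} (hT : Fintype.card ι ≤ T) {d : ι → ℝ} (hd : ∀ i, 0 ≤ d i)
    (hsum : ∑ i, d i = T) : IsFiniteSumOfProjections (diagonal fun i => (d i : ℂ)) := by
  rcases Nat.eq_zero_or_pos T with rfl | hT0
  · have : IsEmpty ι := Fintype.card_eq_zero_iff.mp (Nat.le_zero.mp hT)
    exact ⟨0, ![], nofun, Subsingleton.elim _ _⟩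
  have : NeZero T := ⟨hT0.ne'⟩
  obtain ⟨e⟩ : Nonempty (ι ↪ ZMod T) := Function.Embedding.nonempty_of_card_le (by simpa)
  have hTC : (T : ℂ) ≠ 0 := NeZero.ne _
  set c : ι → ℂ := fun i => (√(d i / T) : ℝ)
  have hc : ∀ i, c i * star (c i) = d i / T := fun i => by
    rw [Complex.star_def, Complex.conj_ofReal, ← Complex.ofReal_mul,
      Real.mul_self_sqrt (div_nonneg (hd i) T.cast_nonneg)]
    push_cast; rfl
  have hunit (j : ZMod T) :
      star (fourierVec ZMod.stdAddChar e c j) ⬝ᵥ fourierVec ZMod.stdAddChar e c j = 1 := by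
    rw [star_fourierVec_dotProduct_self]
    simp only [mul_comm (star _), hc]
    rw [← Finset.sum_div, div_eq_one_iff_eq hTC]
    exact_mod_cast hsum
  have hgram := sum_vecMulVec_fourierVec (ZMod.isPrimitive_stdAddChar T) e.injective c
  simp only [hc, ZMod.card, mul_div_cancel₀ _ hTC] at hgram
  exact hgram ▸ .sum fun j => isStarProjection_vecMulVec_star (hunit j)

theorem rational_diagonal_finite_sum_of_projections_general
    (k h m r : ℕ) (hm : 1 ≤ m)
    (hrk : r * m + m ≤ r * k) :
    ∃ (N : ℕ) (p : Fin N → Matrix (Fin (r * m + m)) (Fin (r * m + m)) ℂ),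
      (∀ i, (p i)ᴴ = p i ∧ p i * p i = p i) ∧
      Matrix.diagonal (fun i : Fin (r * m + m) =>
        if (i : ℕ) < r * m then ((k : ℂ) / (m : ℂ)) else ((h : ℂ) / (m : ℂ)))
        = ∑ i, p i := by
  set d : Fin (r * m + m) → ℝ := fun i => if (i : ℕ) < r * m then (k / m : ℝ) else (h / m : ℝ)
  have hsum : ∑ i, d i = ((r * k + h : ℕ) : ℝ) := by
    have hm0 : (m : ℝ) ≠ 0 := Nat.cast_ne_zero.mpr (by omega)
    rw [Fin.sum_univ_add]
    simp only [d, Fin.val_castAdd, Fin.is_lt, ↓reduceIte, Fin.val_natAdd, add_lt_iff_neg_left,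
      not_lt_zero, Finset.sum_const, Finset.card_univ, Fintype.card_fin, nsmul_eq_mul]
    push_cast
    field_simp
  obtain ⟨N, p, hp, hdp⟩ := isFiniteSumOfProjections_diagonal_of_sum_eq_natCast
    (by rw [Fintype.card_fin]; omega) (fun i => by simp only [d]; split_ifs <;> positivity) hsum
  refine ⟨N, p, fun i => ⟨(hp i).isSelfAdjoint, (hp i).isIdempotentElem⟩, ?_⟩
  rw [← hdp]
  simp only [d, apply_ite Complex.ofReal, Complex.ofReal_div, Complex.ofReal_natCast]

theorem rational_diagonal_finite_sum_of_projections
    (k h m r : ℕ) (hm : 1 ≤ m) (hk : m < k) (hr : 1 ≤ r)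
    (hrk : r * m + m ≤ r * k) :
    ∃ (N : ℕ) (p : Fin N → Matrix (Fin (r * m + m)) (Fin (r * m + m)) ℂ),
      (∀ i, (p i)ᴴ = p i ∧ p i * p i = p i) ∧
      Matrix.diagonal (fun i : Fin (r * m + m) =>
        if (i : ℕ) < r * m then ((k : ℂ) / (m : ℂ)) else ((h : ℂ) / (m : ℂ)))
        = ∑ i, p i :=
  rational_diagonal_finite_sum_of_projections_general k h m r hm hrk
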